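/- Fix L ≥ 1, probabilities p_1,…,p_L and a mean μ > 0, and let G = G(p_L). If z̃_G ≤ e^{−1/(L+1)}, then for every F ∈ F(μ,p_L) one has g_F(z̃_F) ≤ g_G(z̃_G^{(μ)}); equivalently, ξ_F ≥ 1 − g_G(z̃_G^{(μ)}). -/

import Mathlib

open scoped BigOperators

/-- A degree distribution: a sequence of nonnegative probabilities on the positive
integers summing to one, with finite mean and `p 2 ≠ 1`. -/
structure DegreeDist where
  p : ℕ → ℝ
  nonneg : ∀ d, 0 ≤ p d
  zero : p 0 = 0
  psummable : Summable p
  sum_one : ∑' d : ℕ, p d = 1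
  mean_summable : Summable fun d : ℕ => (d : ℝ) * p d
  two_ne_one : p 2 ≠ 1

/-- The mean `μ_F` of a degree distribution. -/
noncomputable def mu (F : DegreeDist) : ℝ := ∑' d : ℕ, (d : ℝ) * F.p d

/-- The probability generating function `g_F`. -/
noncomputable def pgf (F : DegreeDist) (s : ℝ) : ℝ := ∑' d : ℕ, F.p d * s ^ d

/-- The derivative `g_F'` of the probability generating function. -/
noncomputable def pgfD (F : DegreeDist) (s : ℝ) : ℝ := ∑' d : ℕ, (d : ℝ) * F.p d * s ^ (d - 1)

/-- `z` is the smallest `s ∈ [0,1]` with `m * s = g_F'(s)`.  Taking `m = mu F` gives `z̃_F`;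
taking `m = μ` gives `z̃_F^{(μ)}`. -/
def IsSmallestRoot (F : DegreeDist) (m z : ℝ) : Prop :=
  z ∈ Set.Icc (0 : ℝ) 1 ∧ m * z = pgfD F z ∧
    ∀ s ∈ Set.Icc (0 : ℝ) 1, m * s = pgfD F s → z ≤ s

/-- Membership in the class `F(p_L)`: the first `L` probabilities agree with `p`. -/
def MemF (L : ℕ) (p : ℕ → ℝ) (F : DegreeDist) : Prop :=
  ∀ d, 1 ≤ d → d ≤ L → F.p d = p d

/-- The remaining mass `p_{>L} = 1 - ∑_{i=1}^L p_i`. -/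
noncomputable def pGt (L : ℕ) (p : ℕ → ℝ) : ℝ := 1 - ∑ i ∈ Finset.Icc 1 L, p i

/-- The distribution `G = G(p_L)`: all remaining mass at `L+1`. -/
def IsG (L : ℕ) (p : ℕ → ℝ) (G : DegreeDist) : Prop :=
  (∀ d, 1 ≤ d → d ≤ L → G.p d = p d) ∧
  G.p (L + 1) = pGt L p ∧
  ∀ d, L + 1 < d → G.p d = 0

/-- `κ = (μ - ∑_{d=1}^L d p_d) / p_{>L}`. -/
noncomputable def kappa (L : ℕ) (p : ℕ → ℝ) (μ : ℝ) : ℝ :=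
  (μ - ∑ d ∈ Finset.Icc 1 L, (d : ℝ) * p d) / pGt L p

/-- `r_m = (κ - (L+1)) / (m - (L+1))`. -/
noncomputable def rmass (L : ℕ) (κ : ℝ) (m : ℕ) : ℝ :=
  (κ - ((L : ℝ) + 1)) / ((m : ℝ) - ((L : ℝ) + 1))

/-- The distribution `G_m`: mass `(1-r_m) p_{>L}` at `L+1` and `r_m p_{>L}` at `m`. -/
def IsGm (L : ℕ) (p : ℕ → ℝ) (μ : ℝ) (m : ℕ) (Gm : DegreeDist) : Prop :=
  (∀ d, 1 ≤ d → d ≤ L → Gm.p d = p d) ∧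
  Gm.p (L + 1) = (1 - rmass L (kappa L p μ) m) * pGt L p ∧
  Gm.p m = rmass L (kappa L p μ) m * pGt L p ∧
  ∀ d, L + 1 < d → d ≠ m → Gm.p d = 0

/-- The distribution `H = H(μ, p_L)`: remaining mass at `⌊κ⌋` and `⌊κ⌋+1`, preserving mean `μ`. -/
def IsH (L : ℕ) (p : ℕ → ℝ) (μ : ℝ) (H : DegreeDist) : Prop :=
  (∀ d, 1 ≤ d → d ≤ L → H.p d = p d) ∧
  H.p ⌊kappa L p μ⌋₊ = ((⌊kappa L p μ⌋₊ : ℝ) + 1 - kappa L p μ) * pGt L p ∧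
  H.p (⌊kappa L p μ⌋₊ + 1) = (kappa L p μ - (⌊kappa L p μ⌋₊ : ℝ)) * pGt L p ∧
  ∀ d, L < d → d ≠ ⌊kappa L p μ⌋₊ → d ≠ ⌊kappa L p μ⌋₊ + 1 → H.p d = 0

/-! Any `F ∈ F(μ, p_L)` has mean at least `μ_G`, so `μ s - g_G'(s)` changes sign on `[0, z̃_G]`
and `z̃_G^{(μ)} ≤ z̃_G ≤ e^{-1/(L+1)}`. Below `e^{-1/(L+1)}` one has `d s^{d-1} ≤ (L+1) s^L` for
every `d > L`, because `1 + x ≤ eˣ`; so moving the tail of `F` to the single degree `L + 1`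
raises `g'` there, i.e. `g_F'(z̃_G^{(μ)}) ≤ g_G'(z̃_G^{(μ)}) = μ z̃_G^{(μ)}`, and by the intermediate
value theorem `z̃_F ≤ z̃_G^{(μ)}`. Finally `s^d ≤ s^{L+1}` gives `g_F ≤ g_G` on `[0, 1]`, and `g_G`
is increasing. -/

open Finset

lemma add_mul_pow_le_of_le_exp {a s : ℝ} (ha : 0 < a) (hs0 : 0 ≤ s)
    (hs : s ≤ Real.exp (-(1 / a))) (k : ℕ) : (a + k) * s ^ k ≤ a := by
  have hpow : s ^ k ≤ Real.exp (-(k / a)) := by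
    calc s ^ k ≤ Real.exp (-(1 / a)) ^ k := pow_le_pow_left₀ hs0 hs k
      _ = Real.exp (-(k / a)) := by rw [← Real.exp_nat_mul]; ring_nf
  have hlin : a + k ≤ a * Real.exp (k / a) := by
    calc a + k = a * (k / a + 1) := by field_simp; ring
      _ ≤ a * Real.exp (k / a) := mul_le_mul_of_nonneg_left (Real.add_one_le_exp _) ha.le
  calc (a + k) * s ^ k ≤ a * Real.exp (k / a) * Real.exp (-(k / a)) :=
        mul_le_mul hlin hpow (pow_nonneg hs0 k) (by positivity)
    _ = a := by rw [mul_assoc, ← Real.exp_add, add_neg_cancel, Real.exp_zero, mul_one]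

namespace DegreeDist

variable (F : DegreeDist)

lemma mu_eq_tsum : mu F = ∑' d, F.p d * d := tsum_congr fun _ => mul_comm _ _

lemma pgfD_eq_tsum (s : ℝ) : pgfD F s = ∑' d, F.p d * (d * s ^ (d - 1)) :=
  tsum_congr fun _ => by ring

lemma pgfD_zero : pgfD F 0 = F.p 1 := by
  rw [pgfD, tsum_eq_single 1 fun d hd => ?_]
  · simp
  · rcases Nat.lt_or_gt_of_ne hd with h | h
    · simp [Nat.lt_one_iff.mp h]
    · simp [zero_pow (show d - 1 ≠ 0 by omega)]

lemma summable_mul_pow {s : ℝ} (hs : s ∈ Set.Icc (0 : ℝ) 1) :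
    Summable fun d => F.p d * s ^ d :=
  F.psummable.of_nonneg_of_le (fun d => mul_nonneg (F.nonneg d) (pow_nonneg hs.1 d))
    fun d => mul_le_of_le_one_right (F.nonneg d) (pow_le_one₀ hs.1 hs.2)

lemma summable_mul_cast_mul_pow {s : ℝ} (hs : s ∈ Set.Icc (0 : ℝ) 1) :
    Summable fun d => F.p d * (d * s ^ (d - 1)) :=
  F.mean_summable.of_nonneg_of_le
    (fun d => mul_nonneg (F.nonneg d) (mul_nonneg d.cast_nonneg (pow_nonneg hs.1 _)))
    fun d => by
      rw [← mul_assoc, mul_comm (F.p d)]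
      exact mul_le_of_le_one_right (mul_nonneg d.cast_nonneg (F.nonneg d)) (pow_le_one₀ hs.1 hs.2)

lemma continuousOn_pgfD : ContinuousOn (pgfD F) (Set.Icc 0 1) :=
  continuousOn_tsum (fun d => (continuous_const.mul (continuous_pow (d - 1))).continuousOn)
    F.mean_summable fun d _ hs => by
      rw [Real.norm_eq_abs, abs_of_nonneg
        (mul_nonneg (mul_nonneg d.cast_nonneg (F.nonneg d)) (pow_nonneg hs.1 _))]
      exact mul_le_of_le_one_right (mul_nonneg d.cast_nonneg (F.nonneg d)) (pow_le_one₀ hs.1 hs.2)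

lemma monotoneOn_pgf : MonotoneOn (pgf F) (Set.Icc 0 1) := fun _ hs _ ht hst =>
  (F.summable_mul_pow hs).tsum_le_tsum
    (fun d => mul_le_mul_of_nonneg_left (pow_le_pow_left₀ hs.1 hst d) (F.nonneg d))
    (F.summable_mul_pow ht)

end DegreeDist

lemma IsSmallestRoot.le_of_pgfD_le {F : DegreeDist} {m z t : ℝ} (hz : IsSmallestRoot F m z)
    (ht : t ∈ Set.Icc (0 : ℝ) 1) (hle : pgfD F t ≤ m * t) : z ≤ t := by
  have hcont : ContinuousOn (fun s => m * s - pgfD F s) (Set.Icc 0 t) :=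
    (continuous_const.mul continuous_id).continuousOn.sub
      (F.continuousOn_pgfD.mono (Set.Icc_subset_Icc_right ht.2))
  have hsign : (0 : ℝ) ∈ Set.Icc (m * 0 - pgfD F 0) (m * t - pgfD F t) :=
    ⟨by simp [F.pgfD_zero, F.nonneg 1], by linarith⟩
  obtain ⟨s, hs, hroot⟩ := intermediate_value_Icc ht.1 hcont hsign
  exact (hz.2.2 s ⟨hs.1, hs.2.trans ht.2⟩ (sub_eq_zero.mp hroot)).trans hs.2

/-- Since both have total mass one, `G` carries at `L + 1` all the mass that `F` puts beyond `L`. -/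
def IsTailLump (L : ℕ) (F G : DegreeDist) : Prop :=
  (∀ d ≤ L, F.p d = G.p d) ∧ ∀ d, L + 1 < d → G.p d = 0

lemma isTailLump_of_memF_of_isG {L : ℕ} {p : ℕ → ℝ} {F G : DegreeDist} (hF : MemF L p F)
    (hG : IsG L p G) : IsTailLump L F G := by
  refine ⟨fun d hd => ?_, hG.2.2⟩
  rcases Nat.eq_zero_or_pos d with rfl | hd0
  · rw [F.zero, G.zero]
  · rw [hF d hd0 hd, hG.1 d hd0 hd]

namespace IsTailLump

variable {L : ℕ} {F G : DegreeDist} (h : IsTailLump L F G)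
include h

lemma tsum_eq_sum (w : ℕ → ℝ) : ∑' d, G.p d * w d = ∑ d ∈ range (L + 2), G.p d * w d :=
  _root_.tsum_eq_sum fun d hd => by rw [h.2 d (by rw [mem_range] at hd; omega), zero_mul]

lemma sum_range_eq (w : ℕ → ℝ) :
    ∑ d ∈ range (L + 1), F.p d * w d = ∑ d ∈ range (L + 1), G.p d * w d :=
  sum_congr rfl fun d hd => by rw [h.1 d (Nat.lt_succ_iff.mp (mem_range.mp hd))]

lemma p_succ_eq_tsum : G.p (L + 1) = ∑' n, F.p (n + (L + 1)) := by
  have hF := F.psummable.sum_add_tsum_nat_add (L + 1)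
  have hG := h.tsum_eq_sum fun _ => 1
  have hhead := h.sum_range_eq fun _ => 1
  simp only [mul_one] at hG hhead
  rw [G.sum_one, sum_range_succ] at hG
  rw [F.sum_one] at hF
  linarith

lemma tsum_mul_le {w : ℕ → ℝ} (hw : ∀ d, L + 1 ≤ d → w d ≤ w (L + 1))
    (hs : Summable fun d => F.p d * w d) : ∑' d, F.p d * w d ≤ ∑' d, G.p d * w d := by
  have htail : Summable fun n => F.p (n + (L + 1)) :=
    (summable_nat_add_iff (L + 1)).2 F.psummable
  calc ∑' d, F.p d * w d
        = ∑ d ∈ range (L + 1), F.p d * w d + ∑' n, F.p (n + (L + 1)) * w (n + (L + 1)) :=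
        (hs.sum_add_tsum_nat_add (L + 1)).symm
    _ ≤ ∑ d ∈ range (L + 1), F.p d * w d + ∑' n, F.p (n + (L + 1)) * w (L + 1) := by
        exact add_le_add le_rfl (((summable_nat_add_iff (L + 1)).2 hs).tsum_le_tsum
          (fun n => mul_le_mul_of_nonneg_left (hw _ (by omega)) (F.nonneg _))
          (htail.mul_right _))
    _ = ∑' d, G.p d * w d := by
        rw [tsum_mul_right, ← h.p_succ_eq_tsum, h.sum_range_eq, h.tsum_eq_sum, sum_range_succ (fun d => G.p d * w d) (L + 1)]

lemma tsum_mul_ge {w : ℕ → ℝ} (hw : ∀ d, L + 1 ≤ d → w (L + 1) ≤ w d)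
    (hs : Summable fun d => F.p d * w d) : ∑' d, G.p d * w d ≤ ∑' d, F.p d * w d := by
  have := h.tsum_mul_le (w := -w) (fun d hd => neg_le_neg (hw d hd)) (by simpa using hs.neg)
  simpa [tsum_neg] using this

lemma mu_le : mu G ≤ mu F := by
  simpa only [DegreeDist.mu_eq_tsum] using h.tsum_mul_ge (w := fun d => (d : ℝ))
    (fun d hd => by exact_mod_cast hd) (by simpa only [mul_comm] using F.mean_summable)

lemma pgf_le {s : ℝ} (hs : s ∈ Set.Icc (0 : ℝ) 1) : pgf F s ≤ pgf G s :=
  h.tsum_mul_le (fun _ hd => pow_le_pow_of_le_one hs.1 hs.2 hd) (F.summable_mul_pow hs)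

lemma pgfD_le {s : ℝ} (hs0 : 0 ≤ s) (hs : s ≤ Real.exp (-(1 / ((L : ℝ) + 1)))) :
    pgfD F s ≤ pgfD G s := by
  have hs1 : s ≤ 1 := hs.trans (Real.exp_le_one_iff.2 (neg_nonpos.2 (by positivity)))
  rw [F.pgfD_eq_tsum, G.pgfD_eq_tsum]
  refine h.tsum_mul_le (fun d hd => ?_) (F.summable_mul_cast_mul_pow ⟨hs0, hs1⟩)
  obtain ⟨k, rfl⟩ := Nat.exists_eq_add_of_le hd
  have hbound := mul_le_mul_of_nonneg_right
    (add_mul_pow_le_of_le_exp (by positivity : (0 : ℝ) < L + 1) hs0 hs k) (pow_nonneg hs0 L)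
  rw [show L + 1 + k - 1 = k + L by omega, pow_add, Nat.add_sub_cancel]
  push_cast
  linarith

end IsTailLump

theorem tail_does_not_determine_giant_stmt5_general
    (L : ℕ) (p : ℕ → ℝ)
    (μ : ℝ)
    (G : DegreeDist) (hG : IsG L p G)
    (zG : ℝ) (hzG : IsSmallestRoot G (mu G) zG)
    (hcond : zG ≤ Real.exp (-(1 / ((L : ℝ) + 1))))
    (zGmu : ℝ) (hzGmu : IsSmallestRoot G μ zGmu)
    (F : DegreeDist) (hF : MemF L p F) (hFmu : mu F = μ)
    (zF : ℝ) (hzF : IsSmallestRoot F (mu F) zF) :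
    pgf F zF ≤ pgf G zGmu := by
  have hFG := isTailLump_of_memF_of_isG hF hG
  have hzGmu_le : zGmu ≤ zG := hzGmu.le_of_pgfD_le hzG.1 <| by
    rw [← hzG.2.1]
    exact mul_le_mul_of_nonneg_right (hFmu ▸ hFG.mu_le) hzG.1.1
  have hpgfD : pgfD F zGmu ≤ pgfD G zGmu := hFG.pgfD_le hzGmu.1.1 (hzGmu_le.trans hcond)
  have hzF_le : zF ≤ zGmu := hzF.le_of_pgfD_le hzGmu.1 (by rwa [hFmu, hzGmu.2.1])
  calc pgf F zF ≤ pgf G zF := hFG.pgf_le hzF.1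
    _ ≤ pgf G zGmu := G.monotoneOn_pgf hzF.1 hzGmu.1 hzF_le

/-- If `z̃_G ≤ e^{-1/(L+1)}`, then for every `F ∈ F(μ, p_L)` one has
`g_F(z̃_F) ≤ g_G(z̃_G^{(μ)})`, i.e. `ξ_F ≥ 1 - g_G(z̃_G^{(μ)})`. -/
theorem tail_does_not_determine_giant_stmt5
    (L : ℕ) (hL : 1 ≤ L) (p : ℕ → ℝ)
    (hp : ∀ i, 0 ≤ p i) (hplt : ∑ i ∈ Finset.Icc 1 L, p i < 1)
    (μ : ℝ) (hμ : 0 < μ)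
    (G : DegreeDist) (hG : IsG L p G)
    (zG : ℝ) (hzG : IsSmallestRoot G (mu G) zG)
    (hcond : zG ≤ Real.exp (-(1 / ((L : ℝ) + 1))))
    (zGmu : ℝ) (hzGmu : IsSmallestRoot G μ zGmu)
    (F : DegreeDist) (hF : MemF L p F) (hFmu : mu F = μ)
    (zF : ℝ) (hzF : IsSmallestRoot F (mu F) zF) :
    pgf F zF ≤ pgf G zGmu :=
  tail_does_not_determine_giant_stmt5_general L p μ G hG zG hzG hcond zGmu hzGmu F hF hFmu zF hzF
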